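/- arXiv:1010.1941 — 3 statements merged into one kernel-verified Lean document; each statement's English description precedes it below -/
import Mathlib

section
/- The generalized hypergeometric series ₃F₂(−5/2, 1/4, 3/4; 1/2, 1; 1) equals 1141/(960·√2·π) − (103/(256π))·ln((2−√2)/(2+√2)). -/
open Real

noncomputable def poch (a : ℝ) (n : ℕ) : ℝ := Polynomial.eval a (ascPochhammer ℝ n)

/-!
Since `(1/4)ₙ (3/4)ₙ / ((1/2)ₙ n!) = (1/2)₂ₙ / (2n)!` (duplication formula) and
`(1/2)ₘ / m! = (1/π) ∫₀^π cos^{2m} θ dθ` (Wallis), the series equals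
`(1/π) ∫₀^π ∑ₙ (-5/2)ₙ / n! · cos^{4n} θ dθ = (1/π) ∫₀^π (1 - cos⁴ θ)^{5/2} dθ`
by the binomial series, the exchange of sum and integral being justified by the absolute
summability of the binomial coefficients of exponent `5/2`. As
`(1 - cos⁴ θ)^{5/2} = (1 - cos⁴ θ)² √(1 + cos² θ) sin θ`, the substitution `u = cos θ` leaves
`∫₋₁¹ (1 - u⁴)² √(1 + u²) du`, which has an elementary primitive involving `arsinh`.
-/

open Set MeasureTheory
open scoped Nat Interval

lemma poch_zero (a : ℝ) : poch a 0 = 1 := by simp [poch]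

lemma poch_succ (a : ℝ) (n : ℕ) : poch a (n + 1) = poch a n * (a + n) := by
  simp [poch, ascPochhammer_succ_eval]

lemma poch_one (n : ℕ) : poch 1 n = n ! := by
  induction n with
  | zero => simp [poch_zero]
  | succ n ih => rw [poch_succ, ih, Nat.factorial_succ]; push_cast; ring

lemma poch_pos {a : ℝ} (ha : 0 < a) (n : ℕ) : 0 < poch a n := by
  induction n with
  | zero => simp [poch_zero]
  | succ n ih => rw [poch_succ]; positivity

lemma poch_two_mul (a : ℝ) (n : ℕ) :
    poch a (2 * n) = 4 ^ n * poch (a / 2) n * poch ((a + 1) / 2) n := by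
  induction n with
  | zero => simp [poch_zero]
  | succ n ih =>
    rw [show 2 * (n + 1) = 2 * n + 1 + 1 by ring, poch_succ, poch_succ, ih, poch_succ, poch_succ]
    push_cast
    ring

lemma poch_half_mul_poch_half_succ_div (a : ℝ) (n : ℕ) :
    poch (a / 2) n * poch ((a + 1) / 2) n / (poch (1 / 2) n * n !) = poch a (2 * n) / (2 * n)! := by
  have h1 := poch_two_mul 1 n
  norm_num only [poch_one] at h1
  have : poch (1 / 2) n ≠ 0 := (poch_pos (by norm_num) n).ne'
  rw [poch_two_mul, h1]
  field_simp

lemma integral_cos_pow_two_mul (m : ℕ) :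
    ∫ x in (0)..π, cos x ^ (2 * m) = π * (poch (1 / 2) m / m !) := by
  induction m with
  | zero => simp [poch_zero]
  | succ m ih =>
    rw [show 2 * (m + 1) = 2 * m + 2 by ring, integral_cos_pow, ih, poch_succ, Nat.factorial_succ]
    simp only [sin_pi, sin_zero, mul_zero, sub_zero, zero_div, zero_add]
    push_cast
    field_simp
    ring

lemma ring_choose_mul_neg_pow (a x : ℝ) (n : ℕ) :
    Ring.choose a n * (-x) ^ n = poch (-a) n / n ! * x ^ n := by
  rw [Ring.choose_eq_smul, ← Polynomial.aeval_eq_smeval, Polynomial.aeval_def,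
    Polynomial.eval₂_eq_eval_map, descPochhammer_map, poch,
    ascPochhammer_eval_neg_eq_descPochhammer, neg_pow, smul_eq_mul]
  ring

lemma hasSum_poch_neg_div_factorial_mul_pow {a x : ℝ} (hx : |x| < 1) :
    HasSum (fun n => poch (-a) n / n ! * x ^ n) ((1 - x) ^ a) := by
  have h := (one_add_rpow_hasFPowerSeriesOnBall_zero (a := a)).hasSum
    (y := -x) (by simpa [edist_dist] using hx)
  simp only [binomialSeries, FormalMultilinearSeries.ofScalars_apply_eq, smul_eq_mul,
    zero_add] at h
  simpa only [ring_choose_mul_neg_pow, ← sub_eq_add_neg] using h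

lemma abs_poch_add_two_mul_le {a : ℝ} (ha₁ : -3 ≤ a) (ha₂ : a ≤ -1) (n : ℕ) :
    |poch a (n + 2)| * ((n + 1) * (n + 2)) ≤ |poch a 2| * (n + 2)! := by
  induction n with
  | zero => norm_num [Nat.factorial]
  | succ n ih =>
    have hstep : |a + (n + 2 : ℕ)| ≤ n + 1 := by
      rw [abs_le]; push_cast; constructor <;> linarith
    rw [poch_succ, Nat.factorial_succ, abs_mul]
    push_cast at ih hstep ⊢
    calc |poch a (n + 2)| * |a + (n + 2)| * ((n + 1 + 1) * (n + 1 + 2))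
        ≤ |poch a (n + 2)| * (n + 1) * ((n + 1 + 1) * (n + 1 + 2)) := by gcongr
      _ = |poch a (n + 2)| * ((n + 1) * (n + 2)) * (n + 3) := by ring
      _ ≤ |poch a 2| * (n + 2)! * (n + 3) := by gcongr
      _ = |poch a 2| * ((n + 2 + 1) * (n + 2)!) := by ring

lemma summable_abs_poch_div_factorial {a : ℝ} (ha₁ : -3 ≤ a) (ha₂ : a ≤ -1) :
    Summable fun n => |poch a n / n !| := by
  rw [← summable_nat_add_iff 2]
  have hdom : Summable fun n : ℕ => |poch a 2| * (1 / ((n : ℝ) + 1) ^ 2) :=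
    ((summable_nat_add_iff 1).mpr (Real.summable_one_div_nat_pow.mpr one_lt_two)).mul_left _
      |>.congr fun n => by push_cast; rfl
  refine hdom.of_nonneg_of_le (fun n => abs_nonneg _) fun n => ?_
  have hf : (0 : ℝ) < (n + 2)! := by positivity
  rw [abs_div, Nat.abs_cast, div_le_iff₀ hf]
  calc |poch a (n + 2)| ≤ |poch a 2| * (n + 2)! / ((n + 1) * (n + 2)) := by
        rw [le_div_iff₀ (by positivity)]; exact abs_poch_add_two_mul_le ha₁ ha₂ n
    _ ≤ |poch a 2| * (1 / ((n : ℝ) + 1) ^ 2) * (n + 2)! := by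
        rw [div_le_iff₀ (by positivity)]
        field_simp
        gcongr
        linarith

noncomputable def antideriv (u : ℝ) : ℝ :=
  √(1 + u ^ 2) * (u ^ 9 / 10 + u ^ 7 / 80 - 167 / 480 * u ^ 5 - 25 / 384 * u ^ 3 + 153 / 256 * u)
    + 103 / 256 * arsinh u

lemma hasDerivAt_antideriv (u : ℝ) :
    HasDerivAt antideriv ((1 - u ^ 4) ^ 2 * √(1 + u ^ 2)) u := by
  have hpos : 0 < 1 + u ^ 2 := by positivity
  have hs : √(1 + u ^ 2) ^ 2 = 1 + u ^ 2 := sq_sqrt hpos.le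
  have hsqrt : HasDerivAt (fun u : ℝ => √(1 + u ^ 2)) (2 * u / (2 * √(1 + u ^ 2))) u := by
    simpa using ((hasDerivAt_pow 2 u).const_add 1).sqrt hpos.ne'
  have hpoly : HasDerivAt
      (fun u : ℝ => u ^ 9 / 10 + u ^ 7 / 80 - 167 / 480 * u ^ 5 - 25 / 384 * u ^ 3 + 153 / 256 * u)
      (9 * u ^ 8 / 10 + 7 * u ^ 6 / 80 - 167 / 96 * u ^ 4 - 25 / 128 * u ^ 2 + 153 / 256) u := by
    have := (((((hasDerivAt_pow 9 u).div_const 10).add ((hasDerivAt_pow 7 u).div_const 80)).sub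
      ((hasDerivAt_pow 5 u).const_mul (167 / 480))).sub
      ((hasDerivAt_pow 3 u).const_mul (25 / 384))).add ((hasDerivAt_id u).const_mul (153 / 256))
    exact this.congr_deriv (by norm_num; ring)
  refine ((hsqrt.mul hpoly).add ((hasDerivAt_arsinh u).const_mul (103 / 256))).congr_deriv ?_
  field_simp
  rw [hs]
  ring

lemma antideriv_neg (u : ℝ) : antideriv (-u) = -antideriv u := by
  simp only [antideriv, arsinh_neg, neg_sq]
  ring

lemma antideriv_one : antideriv 1 = 1141 / 3840 * √2 + 103 / 256 * log (1 + √2) := by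
  norm_num [antideriv, arsinh]
  ring

lemma one_sub_cos_pow_four_rpow {θ : ℝ} (hθ : 0 ≤ sin θ) :
    (1 - cos θ ^ 4) ^ (5 / 2 : ℝ) = (1 - cos θ ^ 4) ^ 2 * √(1 + cos θ ^ 2) * sin θ := by
  have h : 1 - cos θ ^ 4 = sin θ ^ 2 * (1 + cos θ ^ 2) := by
    rw [sin_sq]; ring
  have h0 : 0 ≤ 1 - cos θ ^ 4 := by rw [h]; positivity
  rw [show (5 / 2 : ℝ) = 2 + 1 / 2 by norm_num, rpow_add' h0 (by norm_num), ← sqrt_eq_rpow,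
    rpow_two, mul_assoc]
  congr 1
  rw [h, sqrt_mul (sq_nonneg _), sqrt_sq hθ, mul_comm]

lemma integral_one_sub_cos_pow_four_rpow :
    ∫ θ in (0)..π, (1 - cos θ ^ 4) ^ (5 / 2 : ℝ) = 2 * antideriv 1 := by
  have hderiv (θ : ℝ) : HasDerivAt (fun θ => -antideriv (cos θ))
      ((1 - cos θ ^ 4) ^ 2 * √(1 + cos θ ^ 2) * sin θ) θ := by
    refine ((hasDerivAt_antideriv (cos θ)).comp θ (hasDerivAt_cos θ)).neg.congr_deriv ?_
    ring
  rw [intervalIntegral.integral_congr (g := fun θ => (1 - cos θ ^ 4) ^ 2 * √(1 + cos θ ^ 2) * sin θ)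
      fun θ hθ => ?_, intervalIntegral.integral_eq_sub_of_hasDerivAt (fun θ _ => hderiv θ)
      ((by fun_prop : Continuous _).intervalIntegrable _ _)]
  · simp only [cos_pi, antideriv_neg, neg_neg, cos_zero, sub_neg_eq_add]
    ring
  · rw [uIcc_of_le pi_pos.le] at hθ
    dsimp only
    exact one_sub_cos_pow_four_rpow (sin_nonneg_of_nonneg_of_le_pi hθ.1 hθ.2)

lemma hasSum_cos_pow_four {θ : ℝ} (hθ : sin θ ≠ 0) :
    HasSum (fun n => poch (-5 / 2) n / n ! * cos θ ^ (4 * n)) ((1 - cos θ ^ 4) ^ (5 / 2 : ℝ)) := by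
  have hcos : |cos θ ^ 4| < 1 := by
    have := sin_sq_add_cos_sq θ
    have := pow_pos (sq_pos_of_ne_zero hθ) 2
    rw [abs_of_nonneg (by positivity)]
    nlinarith
  simpa only [pow_mul, neg_div] using hasSum_poch_neg_div_factorial_mul_pow (a := 5 / 2) hcos

lemma hasSum_poch_div_factorial_mul_integral :
    HasSum (fun n => poch (-5 / 2) n / n ! * (π * (poch (1 / 2) (2 * n) / (2 * n)!)))
      (2 * antideriv 1) := by
  have hsum := summable_abs_poch_div_factorial (a := -5 / 2) (by norm_num) (by norm_num)
  have hlim : ∀ᵐ θ, θ ∈ Ι 0 π → HasSum (fun n => poch (-5 / 2) n / n ! * cos θ ^ (4 * n))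
      ((1 - cos θ ^ 4) ^ (5 / 2 : ℝ)) := by
    -- at `θ = π` the binomial series would be evaluated on the boundary of its disc
    filter_upwards [compl_mem_ae_iff.mpr (measure_singleton π)] with θ hπ hθ
    rw [uIoc_of_le pi_pos.le] at hθ
    exact hasSum_cos_pow_four (sin_pos_of_pos_of_lt_pi hθ.1 (lt_of_le_of_ne hθ.2 hπ)).ne'
  have h := intervalIntegral.hasSum_integral_of_dominated_convergence
    (fun n _ => |poch (-5 / 2) n / (n ! : ℝ)|)
    (fun n => (by fun_prop : Continuous _).aestronglyMeasurable)
    (fun n => ae_of_all _ fun θ _ => ?_) (ae_of_all _ fun _ _ => hsum) intervalIntegrable_const hlim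
  · simpa only [intervalIntegral.integral_const_mul, show ∀ n, 4 * n = 2 * (2 * n) by intro n; ring,
      integral_cos_pow_two_mul, integral_one_sub_cos_pow_four_rpow] using h
  · rw [norm_mul, Real.norm_eq_abs, norm_pow, Real.norm_eq_abs]
    exact mul_le_of_le_one_right (abs_nonneg _) (pow_le_one₀ (abs_nonneg _) (abs_cos_le_one θ))

lemma log_two_sub_sqrt_two_div_two_add_sqrt_two :
    log ((2 - √2) / (2 + √2)) = -2 * log (1 + √2) := by
  have h : (2 - √2) / (2 + √2) = ((1 + √2) ^ 2)⁻¹ := by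
    have : (2 + √2) ≠ 0 := by positivity
    field_simp
    nlinarith [sq_sqrt (show (0 : ℝ) ≤ 2 by norm_num)]
  rw [h, log_inv, log_pow]
  push_cast
  ring

theorem stmt_2 :
    ∑' n : ℕ, (poch (-5/2) n * poch (1/4) n * poch (3/4) n) / (poch (1/2) n * poch (1) n * (Nat.factorial n : ℝ)) * (1 : ℝ) ^ n
      = 1141 / (960 * Real.sqrt 2 * Real.pi)
        - 103 / (256 * Real.pi) * Real.log ((2 - Real.sqrt 2)/(2 + Real.sqrt 2)) := by
  have hterm (n : ℕ) : (poch (-5/2) n * poch (1/4) n * poch (3/4) n) /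
      (poch (1/2) n * poch (1) n * (Nat.factorial n : ℝ)) * (1 : ℝ) ^ n
      = poch (-5 / 2) n / n ! * (π * (poch (1 / 2) (2 * n) / (2 * n)!)) / π := by
    have h := poch_half_mul_poch_half_succ_div (1 / 2) n
    norm_num at h
    rw [poch_one, one_pow, mul_one, mul_left_comm (poch (-5 / 2) n / n !),
      mul_div_cancel_left₀ _ pi_ne_zero, ← h]
    field_simp
  rw [tsum_congr hterm, (hasSum_poch_div_factorial_mul_integral.div_const π).tsum_eq, antideriv_one,
    log_two_sub_sqrt_two_div_two_add_sqrt_two]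
  field_simp
  linear_combination (1920 * 1141 * 256) * sq_sqrt (show (0 : ℝ) ≤ 2 by norm_num)
end

section
/- The infinite series ∑_{n=1}^∞ 4^n·(n+1)^2 / ( (2n+1)·C(4n+1, 2n) ) equals ( −36 + 45π + 10√3·arcosh 2 ) / 144. -/
/-
The Beta integral `∫₀¹ xᵐ (1 - x)ᵐ dx = m! ² / (2m + 1)!` turns the general term into
`∫₀¹ (n + 1)² uⁿ dt` with `u = 4 (t (1 - t))² ≤ 1/4`. Summing under the integral
(the terms are nonnegative, so they dominate themselves) and using
`∑ (n + 1)² uⁿ = (1 + u) / (1 - u)³`, the series from `n = 0` becomes the integral of a rational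
function of `t`, evaluated by an explicit primitive as `(108 + 45π + 10√3 log (2 + √3)) / 144`.
Dropping the `n = 0` term, which is `1`, gives the claim, since `arcosh 2 = log (2 + √3)`.
-/

open Real

noncomputable def arcosh (x : ℝ) : ℝ := Real.log (x + Real.sqrt (x^2 - 1))

open Nat MeasureTheory

theorem Complex.betaIntegral_natCast_add_one (a b : ℕ) :
    Complex.betaIntegral (a + 1) (b + 1) = ↑(∫ x in (0:ℝ)..1, x ^ a * (1 - x) ^ b) := by
  rw [Complex.betaIntegral, ← intervalIntegral.integral_ofReal]
  refine intervalIntegral.integral_congr fun x _ => ?_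
  simp only [add_sub_cancel_right, Complex.cpow_natCast]
  push_cast
  rfl

theorem integral_pow_mul_one_sub_pow (a b : ℕ) :
    ∫ x in (0:ℝ)..1, x ^ a * (1 - x) ^ b = a ! * b ! / (a + b + 1)! := by
  have h := Complex.Gamma_mul_Gamma_eq_betaIntegral (s := a + 1) (t := b + 1)
    (by simpa using a.cast_add_one_pos) (by simpa using b.cast_add_one_pos)
  rw [show (a + 1 + (b + 1) : ℂ) = ((a + b + 1 : ℕ) : ℂ) + 1 by push_cast; ring,
    Complex.Gamma_nat_eq_factorial, Complex.Gamma_nat_eq_factorial,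
    Complex.Gamma_nat_eq_factorial, Complex.betaIntegral_natCast_add_one] at h
  rw [eq_div_iff (by positivity), mul_comm]
  exact_mod_cast h.symm

theorem integral_mul_one_sub_pow (m : ℕ) :
    ∫ x in (0:ℝ)..1, (x * (1 - x)) ^ m = ((m + 1) * (2 * m + 1).choose m : ℝ)⁻¹ := by
  simp_rw [mul_pow]
  rw [integral_pow_mul_one_sub_pow]
  have h := Nat.choose_mul_factorial_mul_factorial (n := 2 * m + 1) (k := m) (by omega)
  rw [show 2 * m + 1 - m = m + 1 by omega, Nat.factorial_succ m] at h
  rw [show m + m + 1 = 2 * m + 1 by ring, ← h]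
  push_cast
  have : (m ! : ℝ) ≠ 0 := by positivity
  field_simp

theorem hasSum_add_one_sq_mul_geometric {𝕜 : Type*} [NormedField 𝕜] [HasSummableGeomSeries 𝕜]
    {r : 𝕜} (hr : ‖r‖ < 1) :
    HasSum (fun n : ℕ => ((n : 𝕜) + 1) ^ 2 * r ^ n) ((1 + r) / (1 - r) ^ 3) := by
  have hr1 : (1 : 𝕜) - r ≠ 0 := by
    rintro h
    rw [← sub_eq_zero.1 h, norm_one] at hr
    exact lt_irrefl _ hr
  have hterm (n : ℕ) : ((n : 𝕜) + 1) ^ 2 * r ^ n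
      = 2 * ((n + 2).choose 2 * r ^ n) - (n + 1).choose 1 * r ^ n := by
    have hc := congrArg (Nat.cast (R := 𝕜)) (Nat.add_one_mul_choose_eq (n + 1) 1)
    simp only [Nat.choose_one_right] at hc ⊢
    push_cast at hc ⊢
    linear_combination r ^ n * hc
  have hval : (1 + r) / (1 - r) ^ 3 = 2 * (1 / (1 - r) ^ (2 + 1)) - 1 / (1 - r) ^ (1 + 1) := by
    field_simp
    ring
  simpa only [hterm, hval] using ((hasSum_choose_mul_geometric_of_norm_lt_one 2 hr).mul_left 2).sub
    (hasSum_choose_mul_geometric_of_norm_lt_one 1 hr)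

noncomputable def seriesTerm (n : ℕ) : ℝ :=
  4 ^ n * ((n : ℝ) + 1) ^ 2 / ((2 * (n : ℝ) + 1) * ((4 * n + 1).choose (2 * n) : ℝ))

theorem seriesTerm_eq_integral (n : ℕ) :
    seriesTerm n = ∫ t in (0:ℝ)..1, ((n : ℝ) + 1) ^ 2 * (4 * (t * (1 - t)) ^ 2) ^ n := by
  have hintegrand (t : ℝ) : ((n : ℝ) + 1) ^ 2 * (4 * (t * (1 - t)) ^ 2) ^ n
      = (4 ^ n * ((n : ℝ) + 1) ^ 2) * (t * (1 - t)) ^ (2 * n) := by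
    rw [mul_pow, pow_mul]
    ring
  simp_rw [hintegrand]
  rw [intervalIntegral.integral_const_mul, integral_mul_one_sub_pow, seriesTerm]
  push_cast
  ring_nf

theorem hasDerivAt_arctan_two_mul_sub_one (t : ℝ) :
    HasDerivAt (fun t => arctan (2 * t - 1)) (1 / (2 * t ^ 2 - 2 * t + 1)) t := by
  have h := (Real.hasDerivAt_arctan (2 * t - 1)).comp t
    (((hasDerivAt_id t).const_mul 2).sub_const 1)
  have hP : 2 * t ^ 2 - 2 * t + 1 ≠ 0 := by nlinarith [sq_nonneg (2 * t - 1)]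
  refine h.congr_deriv ?_
  rw [show 1 + (2 * t - 1) ^ 2 = 2 * (2 * t ^ 2 - 2 * t + 1) by ring]
  field_simp

theorem hasDerivAt_log_sqrt_three_add_sub_log_sqrt_three_sub {t : ℝ} (ht : |2 * t - 1| < √3) :
    HasDerivAt (fun t => log (√3 + (2 * t - 1)) - log (√3 - (2 * t - 1)))
      (2 * √3 / (1 + 2 * t - 2 * t ^ 2)) t := by
  obtain ⟨hlo, hhi⟩ := abs_lt.1 ht
  have hlin : HasDerivAt (fun t : ℝ => 2 * t - 1) 2 t := by
    simpa using ((hasDerivAt_id t).const_mul 2).sub_const 1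
  have h := ((hlin.const_add √3).log (by linarith)).sub ((hlin.const_sub √3).log (by linarith))
  have h3 : √3 ^ 2 = 3 := Real.sq_sqrt (by norm_num)
  have hQ : 1 + 2 * t - 2 * t ^ 2 ≠ 0 := by nlinarith
  have ha : √3 + (2 * t - 1) ≠ 0 := by linarith
  have hb : √3 - (2 * t - 1) ≠ 0 := by linarith
  refine h.congr_deriv ?_
  field_simp
  linear_combination -√3 * h3

noncomputable def seriesIntegrand (t : ℝ) : ℝ :=
  (1 + 4 * (t * (1 - t)) ^ 2) / (1 - 4 * (t * (1 - t)) ^ 2) ^ 3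

noncomputable def seriesPrimitiveRationalPart (t : ℝ) : ℝ :=
  (2 * t - 1) / (4 * (2 * t ^ 2 - 2 * t + 1))
    + (2 * t - 1) / (16 * (2 * t ^ 2 - 2 * t + 1) ^ 2)
    + (2 * t - 1) / (24 * (1 + 2 * t - 2 * t ^ 2))
    + (2 * t - 1) / (48 * (1 + 2 * t - 2 * t ^ 2) ^ 2)

/- Partial fractions of `seriesIntegrand` over
`1 - 4 (t (1 - t)) ^ 2 = (2 t ^ 2 - 2 t + 1) (1 + 2 t - 2 t ^ 2)`: the simple poles of the two
quadratic factors produce the `arctan` and the `log` terms. -/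
noncomputable def seriesPrimitive (t : ℝ) : ℝ :=
  5 / 8 * arctan (2 * t - 1)
    + 5 * √3 / 144 * (log (√3 + (2 * t - 1)) - log (√3 - (2 * t - 1)))
    + seriesPrimitiveRationalPart t

theorem hasDerivAt_seriesPrimitiveRationalPart {t : ℝ} (hQ : 1 + 2 * t - 2 * t ^ 2 ≠ 0) :
    HasDerivAt seriesPrimitiveRationalPart
      (seriesIntegrand t - 5 / 8 / (2 * t ^ 2 - 2 * t + 1) - 5 / 24 / (1 + 2 * t - 2 * t ^ 2))
      t := by
  have hP : 2 * t ^ 2 - 2 * t + 1 ≠ 0 := by nlinarith [sq_nonneg (2 * t - 1)]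
  have hlin : HasDerivAt (fun t : ℝ => 2 * t - 1) 2 t := by
    simpa using ((hasDerivAt_id t).const_mul 2).sub_const 1
  have hPd : HasDerivAt (fun t : ℝ => 2 * t ^ 2 - 2 * t + 1) (4 * t - 2) t := by
    have h := (((hasDerivAt_pow 2 t).const_mul 2).sub ((hasDerivAt_id t).const_mul 2)).add_const 1
    exact h.congr_deriv (by push_cast; ring)
  have hQd : HasDerivAt (fun t : ℝ => 1 + 2 * t - 2 * t ^ 2) (2 - 4 * t) t := by
    have h := (((hasDerivAt_id t).const_mul 2).const_add 1).sub ((hasDerivAt_pow 2 t).const_mul 2)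
    exact h.congr_deriv (by push_cast; ring)
  have h := (((hlin.div (hPd.const_mul 4) (by positivity)).add
    (hlin.div ((hPd.pow 2).const_mul 16) (by simp [hP]))).add
    (hlin.div (hQd.const_mul 24) (by positivity))).add
    (hlin.div ((hQd.pow 2).const_mul 48) (by simp [hQ]))
  refine h.congr_deriv ?_
  simp only [Pi.pow_apply, Nat.cast_ofNat, seriesIntegrand]
  rw [show 1 - 4 * (t * (1 - t)) ^ 2 = (2 * t ^ 2 - 2 * t + 1) * (1 + 2 * t - 2 * t ^ 2) by ring]
  have hP' : 2 * t * (t - 1) + 1 ≠ 0 := by nlinarith [sq_nonneg (2 * t - 1)]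
  field_simp
  ring

theorem hasDerivAt_seriesPrimitive {t : ℝ} (ht : |2 * t - 1| < √3) :
    HasDerivAt seriesPrimitive (seriesIntegrand t) t := by
  have hQ : 0 < 1 + 2 * t - 2 * t ^ 2 := by
    have h3 : √3 ^ 2 = 3 := Real.sq_sqrt (by norm_num)
    nlinarith [sq_abs (2 * t - 1), abs_nonneg (2 * t - 1)]
  have h := (((hasDerivAt_arctan_two_mul_sub_one t).const_mul (5 / 8)).add
    ((hasDerivAt_log_sqrt_three_add_sub_log_sqrt_three_sub ht).const_mul (5 * √3 / 144))).add
    (hasDerivAt_seriesPrimitiveRationalPart hQ.ne')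
  have h3 : √3 * √3 = 3 := Real.mul_self_sqrt (by norm_num)
  exact h.congr_deriv (by linear_combination (10 / 144 / (1 + 2 * t - 2 * t ^ 2)) * h3)

theorem seriesPrimitive_one_sub_zero :
    seriesPrimitive 1 - seriesPrimitive 0 = (108 + 45 * π + 10 * √3 * log (2 + √3)) / 144 := by
  have h3 : √3 * √3 = 3 := Real.mul_self_sqrt (by norm_num)
  have h1 : 1 < √3 := by
    rw [show (1 : ℝ) = √1 by simp]
    exact Real.sqrt_lt_sqrt (by norm_num) (by norm_num)
  have hlog : log (√3 + 1) - log (√3 - 1) = log (2 + √3) := by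
    rw [← Real.log_div (by positivity) (by linarith)]
    congr 1
    rw [div_eq_iff (by linarith)]
    linear_combination -h3
  simp only [seriesPrimitive, seriesPrimitiveRationalPart]
  norm_num
  rw [show √3 + -1 = √3 - 1 by ring, ← hlog]
  ring

theorem four_mul_sq_mul_one_sub_le {t : ℝ} (ht : t ∈ Set.Icc (0 : ℝ) 1) :
    4 * (t * (1 - t)) ^ 2 ≤ 1 / 4 := by
  obtain ⟨ht0, ht1⟩ := ht
  have hp : t * (1 - t) ≤ 1 / 4 := by nlinarith [sq_nonneg (2 * t - 1)]
  have hp0 : 0 ≤ t * (1 - t) := by nlinarith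
  nlinarith

theorem intervalIntegrable_seriesIntegrand : IntervalIntegrable seriesIntegrand volume 0 1 := by
  refine ContinuousOn.intervalIntegrable ((by fun_prop : Continuous _).continuousOn.div
    (by fun_prop) fun t ht => ?_)
  rw [Set.uIcc_of_le zero_le_one] at ht
  have := four_mul_sq_mul_one_sub_le ht
  exact pow_ne_zero 3 (by linarith)

theorem integral_seriesIntegrand :
    ∫ t in (0:ℝ)..1, seriesIntegrand t = (108 + 45 * π + 10 * √3 * log (2 + √3)) / 144 := by
  rw [← seriesPrimitive_one_sub_zero]
  refine intervalIntegral.integral_eq_sub_of_hasDerivAt (fun t ht => ?_)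
    intervalIntegrable_seriesIntegrand
  rw [Set.uIcc_of_le zero_le_one] at ht
  refine hasDerivAt_seriesPrimitive (abs_lt.2 ⟨?_, ?_⟩) <;>
    nlinarith [ht.1, ht.2, Real.sqrt_nonneg 3, Real.sq_sqrt (show (0 : ℝ) ≤ 3 by norm_num)]

theorem hasSum_seriesTerm :
    HasSum seriesTerm ((108 + 45 * π + 10 * √3 * log (2 + √3)) / 144) := by
  have hsum {t : ℝ} (ht : t ∈ Set.Icc (0 : ℝ) 1) :
      HasSum (fun n : ℕ => ((n : ℝ) + 1) ^ 2 * (4 * (t * (1 - t)) ^ 2) ^ n)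
        (seriesIntegrand t) := by
    refine hasSum_add_one_sq_mul_geometric ?_
    rw [Real.norm_of_nonneg (by positivity)]
    linarith [four_mul_sq_mul_one_sub_le ht]
  have hIoc : Set.uIoc (0 : ℝ) 1 ⊆ Set.Icc 0 1 := by
    rw [Set.uIoc_of_le zero_le_one]
    exact Set.Ioc_subset_Icc_self
  rw [funext seriesTerm_eq_integral, ← integral_seriesIntegrand]
  refine intervalIntegral.hasSum_integral_of_dominated_convergence
    (fun n t => ((n : ℝ) + 1) ^ 2 * (4 * (t * (1 - t)) ^ 2) ^ n)
    (fun n => (by fun_prop : Continuous _).aestronglyMeasurable)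
    (fun n => ae_of_all _ fun t _ => (Real.norm_of_nonneg (by positivity)).le)
    (ae_of_all _ fun t ht => (hsum (hIoc ht)).summable)
    (intervalIntegrable_seriesIntegrand.congr fun t ht => ((hsum (hIoc ht)).tsum_eq).symm)
    (ae_of_all _ fun t ht => hsum (hIoc ht))

theorem seriesTerm_zero : seriesTerm 0 = 1 := by
  simp [seriesTerm]

theorem stmt_18 :
    ∑' k : ℕ, (fun n : ℕ =>
        (4 : ℝ) ^ n * ((n:ℝ)+1)^2 / ((2*(n:ℝ)+1) * (Nat.choose (4*n+1) (2*n) : ℝ))) (k + 1)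
      = (-36 + 45 * Real.pi + 10 * Real.sqrt 3 * _root_.arcosh 2) / 144 := by
  have harcosh : _root_.arcosh 2 = log (2 + √3) := by norm_num [_root_.arcosh]
  change ∑' k, seriesTerm (k + 1) = _
  rw [(hasSum_nat_add_iff' 1).2 hasSum_seriesTerm |>.tsum_eq, Finset.sum_range_one,
    seriesTerm_zero, harcosh]
  ring
end

section
/- The infinite series ∑_{n=2}^∞ (1/32)^n · C(2n,n)·C(2n−3, n−2)·(2n−1)/n equals Γ(1/4)^2 / (8·π^{3/2}) − 9/32. -/
/-!
Write `c n = centralBinom n / 4 ^ n`. The recursion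
`n * centralBinom n = 2 (2n - 1) centralBinom (n - 1)` turns the summand into `c n ^ 2 * 2⁻ⁿ / 4`,
so the claim is `∑ c n ^ 2 2⁻ⁿ = Γ(1/4)² / (2 π^{3/2})`. Since `c n` is the `n`-th moment of the
arcsine law `dt / (π √(t (1 - t)))` on `(0, 1)` and `∑ c n yⁿ = (1 - y)^{-1/2}` is the binomial
series, this sum is `π⁻¹ ∫₀¹ (1 - t/2)^{-1/2} dt / √(t (1 - t))`. The substitution `t = 1 - √u`
turns the integral into the Beta integral `B(1/4, 1/2) / √2`, and the reflection formula
`Γ(1/4) Γ(3/4) = π √2` gives the closed form.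
-/

open Real MeasureTheory Set

theorem Complex.ofReal_cpow_mul_one_sub_cpow {x : ℝ} (hx0 : 0 ≤ x) (hx1 : x ≤ 1) (p q : ℝ) :
    (x : ℂ) ^ ((p : ℂ) - 1) * (1 - (x : ℂ)) ^ ((q : ℂ) - 1)
      = ((x ^ (p - 1) * (1 - x) ^ (q - 1) : ℝ) : ℂ) := by
  rw [Complex.ofReal_mul, Complex.ofReal_cpow hx0, Complex.ofReal_cpow (sub_nonneg.mpr hx1)]
  push_cast
  rfl

theorem integrableOn_rpow_mul_one_sub_rpow {p q : ℝ} (hp : 0 < p) (hq : 0 < q) :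
    IntegrableOn (fun x : ℝ ↦ x ^ (p - 1) * (1 - x) ^ (q - 1)) (Ioo 0 1) := by
  have h := Complex.betaIntegral_convergent (u := p) (v := q) (by simpa) (by simpa)
  rw [intervalIntegrable_iff_integrableOn_Ioc_of_le zero_le_one] at h
  refine IntegrableOn.congr_fun (h.mono_set Ioo_subset_Ioc_self).re (fun x hx ↦ ?_)
    measurableSet_Ioo
  simp only [Complex.ofReal_cpow_mul_one_sub_cpow hx.1.le hx.2.le, RCLike.re_to_complex,
    Complex.ofReal_re]

theorem integral_rpow_mul_one_sub_rpow {p q : ℝ} (hp : 0 < p) (hq : 0 < q) :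
    ∫ x in Ioo (0 : ℝ) 1, x ^ (p - 1) * (1 - x) ^ (q - 1)
      = Gamma p * Gamma q / Gamma (p + q) := by
  have h := Complex.betaIntegral_eq_Gamma_mul_div (u := p) (v := q) (by simpa) (by simpa)
  rw [Complex.betaIntegral, intervalIntegral.integral_of_le zero_le_one,
    integral_Ioc_eq_integral_Ioo, setIntegral_congr_fun measurableSet_Ioo
      (fun x hx ↦ Complex.ofReal_cpow_mul_one_sub_cpow hx.1.le hx.2.le p q),
    integral_complex_ofReal,
    ← Complex.ofReal_add, Complex.Gamma_ofReal, Complex.Gamma_ofReal, Complex.Gamma_ofReal] at h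
  exact_mod_cast h

theorem ascPochhammer_eval_one_half (n : ℕ) :
    (ascPochhammer ℝ n).eval (1 / 2) = n.centralBinom * n.factorial / 4 ^ n := by
  induction n with
  | zero => simp
  | succ n ih =>
    have h : ((n + 1 : ℕ) : ℝ) * (n + 1).centralBinom = 2 * (2 * n + 1) * n.centralBinom := by
      exact_mod_cast n.succ_mul_centralBinom_succ
    rw [ascPochhammer_succ_eval, ih, Nat.factorial_succ, pow_succ]
    push_cast at h ⊢
    field_simp
    linear_combination (-2 : ℝ) * h

theorem Real.Gamma_nat_add_one_half (n : ℕ) :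
    Gamma (n + 1 / 2) = (ascPochhammer ℝ n).eval (1 / 2) * √π := by
  induction n with
  | zero => simpa using Gamma_one_half_eq
  | succ n ih =>
    rw [Nat.cast_succ, add_right_comm, Gamma_add_one (by positivity), ih, ascPochhammer_succ_eval]
    ring

theorem Ring.choose_sub_one_half (n : ℕ) :
    Ring.choose ((n : ℝ) - 1 / 2) n = n.centralBinom / 4 ^ n := by
  rw [Ring.choose_eq_smul, Polynomial.descPochhammer_smeval_eq_ascPochhammer,
    Polynomial.ascPochhammer_smeval_eq_eval, show (n : ℝ) - 1 / 2 - n + 1 = 1 / 2 by ring,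
    ascPochhammer_eval_one_half, smul_eq_mul]
  field_simp

theorem hasSum_centralBinom_div_four_pow_mul_pow {x : ℝ} (hx : |x| < 1) :
    HasSum (fun n ↦ n.centralBinom / 4 ^ n * x ^ n) (√(1 - x))⁻¹ := by
  have h := (one_div_one_sub_rpow_hasFPowerSeriesOnBall_zero (1 / 2)).hasSum
    (y := x) (by simpa [edist_dist, Real.dist_eq] using hx)
  simp only [FormalMultilinearSeries.ofScalars_apply_eq, zero_add, smul_eq_mul,
    show ∀ n : ℕ, (1 / 2 : ℝ) + n - 1 = n - 1 / 2 from fun n ↦ by ring,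
    Ring.choose_sub_one_half] at h
  rwa [sqrt_eq_rpow, ← one_div]

noncomputable def arcsineWeight (t : ℝ) : ℝ := t ^ (-(1 / 2) : ℝ) * (1 - t) ^ (-(1 / 2) : ℝ)

theorem pow_mul_arcsineWeight_eq {t : ℝ} (ht : 0 < t) (n : ℕ) :
    t ^ n * arcsineWeight t = t ^ ((n + 1 / 2 : ℝ) - 1) * (1 - t) ^ ((1 / 2 : ℝ) - 1) := by
  rw [arcsineWeight, show (n + 1 / 2 : ℝ) - 1 = n + -(1 / 2) by ring, rpow_add ht, rpow_natCast]
  norm_num [mul_assoc]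

theorem integrableOn_pow_mul_arcsineWeight (n : ℕ) :
    IntegrableOn (fun t ↦ t ^ n * arcsineWeight t) (Ioo 0 1) :=
  (integrableOn_rpow_mul_one_sub_rpow (by positivity) one_half_pos).congr_fun
    (fun _ ht ↦ (pow_mul_arcsineWeight_eq ht.1 n).symm) measurableSet_Ioo

theorem integral_pow_mul_arcsineWeight (n : ℕ) :
    ∫ t in Ioo (0 : ℝ) 1, t ^ n * arcsineWeight t = π * (n.centralBinom / 4 ^ n) := by
  rw [setIntegral_congr_fun measurableSet_Ioo (fun _ ht ↦ pow_mul_arcsineWeight_eq ht.1 n),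
    integral_rpow_mul_one_sub_rpow (by positivity) one_half_pos,
    show (n + 1 / 2 + 1 / 2 : ℝ) = n + 1 by ring, Gamma_nat_eq_factorial, Gamma_one_half_eq,
    Gamma_nat_add_one_half, ascPochhammer_eval_one_half]
  have hπ : √π * √π = π := mul_self_sqrt pi_pos.le
  field_simp
  linear_combination (n.centralBinom : ℝ) * hπ

theorem arcsineWeight_nonneg {t : ℝ} (ht0 : 0 ≤ t) (ht1 : t ≤ 1) : 0 ≤ arcsineWeight t :=
  mul_nonneg (rpow_nonneg ht0 _) (rpow_nonneg (sub_nonneg.mpr ht1) _)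

theorem centralBinom_div_four_pow_le_one (n : ℕ) : (n.centralBinom / 4 ^ n : ℝ) ≤ 1 := by
  rw [div_le_one (by positivity)]
  exact_mod_cast n.centralBinom_le_four_pow

theorem summable_centralBinom_sq_mul_pow {x : ℝ} (hx : |x| < 1) :
    Summable fun n : ℕ ↦ (n.centralBinom / 4 ^ n : ℝ) ^ 2 * |x| ^ n := by
  refine (summable_geometric_of_lt_one (abs_nonneg x) hx).of_nonneg_of_le (fun n ↦ by positivity)
    fun n ↦ mul_le_of_le_one_left (by positivity) ?_
  exact pow_le_one₀ (by positivity) (centralBinom_div_four_pow_le_one n)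

theorem hasSum_centralBinom_sq_mul_pow {x : ℝ} (hx : |x| < 1) :
    HasSum (fun n : ℕ ↦ (n.centralBinom / 4 ^ n : ℝ) ^ 2 * x ^ n)
      (π⁻¹ * ∫ t in Ioo (0 : ℝ) 1, (√(1 - x * t))⁻¹ * arcsineWeight t) := by
  set c : ℕ → ℝ := fun n ↦ n.centralBinom / 4 ^ n
  set F : ℕ → ℝ → ℝ := fun n t ↦ c n * x ^ n * (t ^ n * arcsineWeight t)
  have hF_int (n : ℕ) : IntegrableOn (F n) (Ioo 0 1) :=
    (integrableOn_pow_mul_arcsineWeight n).const_mul _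
  have hF_integral (n : ℕ) : ∫ t in Ioo (0 : ℝ) 1, F n t = π * (c n ^ 2 * x ^ n) := by
    rw [integral_const_mul, integral_pow_mul_arcsineWeight]
    ring
  have hF_norm (n : ℕ) : ∫ t in Ioo (0 : ℝ) 1, ‖F n t‖ = π * (c n ^ 2 * |x| ^ n) := by
    rw [setIntegral_congr_fun measurableSet_Ioo fun t ht ↦ by
        rw [norm_mul, norm_of_nonneg (mul_nonneg (pow_nonneg ht.1.le n)
          (arcsineWeight_nonneg ht.1.le ht.2.le))],
      integral_const_mul, integral_pow_mul_arcsineWeight, norm_mul, norm_pow, norm_of_nonneg]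
    · simp only [c, norm_eq_abs]
      ring
    · positivity
  have hF_sum : HasSum (fun n ↦ ∫ t in Ioo (0 : ℝ) 1, F n t)
      (∫ t in Ioo (0 : ℝ) 1, ∑' n, F n t) :=
    hasSum_integral_of_summable_integral_norm hF_int
      (by simpa only [hF_norm] using (summable_centralBinom_sq_mul_pow hx).mul_left π)
  have hF_tsum (t : ℝ) (ht : t ∈ Ioo (0 : ℝ) 1) :
      ∑' n, F n t = (√(1 - x * t))⁻¹ * arcsineWeight t := by
    have hxt : |x * t| < 1 := by
      rw [abs_mul, abs_of_pos ht.1]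
      nlinarith [abs_nonneg x, ht.1, ht.2]
    rw [← (hasSum_centralBinom_div_four_pow_mul_pow hxt).tsum_eq, ← tsum_mul_right]
    congr 1 with n
    simp only [F, c, mul_pow]
    ring
  rw [setIntegral_congr_fun measurableSet_Ioo hF_tsum] at hF_sum
  simpa only [hF_integral, ← mul_assoc, inv_mul_cancel₀ pi_ne_zero, one_mul]
    using hF_sum.mul_left π⁻¹

theorem rpow_neg_one_half {x : ℝ} (hx : 0 ≤ x) : x ^ (-(1 / 2) : ℝ) = (√x)⁻¹ := by
  rw [rpow_neg hx, sqrt_eq_rpow]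

theorem image_one_sub_sqrt_Ioo : (fun u ↦ 1 - √u) '' Ioo (0 : ℝ) 1 = Ioo 0 1 := by
  ext t
  constructor
  · rintro ⟨u, ⟨hu0, hu1⟩, rfl⟩
    have : √u < 1 := (sqrt_lt' one_pos).mpr (by simpa using hu1)
    exact ⟨by linarith, by linarith [sqrt_pos.mpr hu0]⟩
  · rintro ⟨ht0, ht1⟩
    refine ⟨(1 - t) ^ 2, ⟨by positivity, by nlinarith⟩, ?_⟩
    simp only [sqrt_sq (by linarith : 0 ≤ 1 - t)]
    ring

-- The integrand after the substitution `t = 1 - √u`, written at `u = a ^ 2`.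
theorem abs_deriv_mul_arcsineWeight_one_sub_eq {a : ℝ} (ha0 : 0 < a) (ha1 : a < 1) :
    |-(1 / (2 * a))| * ((√(1 - 1 / 2 * (1 - a)))⁻¹ * arcsineWeight (1 - a))
      = (√2)⁻¹ * ((a ^ 2) ^ ((1 / 4 : ℝ) - 1) * (1 - a ^ 2) ^ ((1 / 2 : ℝ) - 1)) := by
  have h1a : 0 < 1 - a := by linarith
  have h1a' : 0 < 1 + a := by linarith
  have hsq_pow : (a ^ 2) ^ ((1 / 4 : ℝ) - 1) = (a * √a)⁻¹ := by
    rw [← rpow_natCast, ← rpow_mul ha0.le,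
      show ((2 : ℕ) : ℝ) * (1 / 4 - 1) = -(1 + 1 / 2) by norm_num, rpow_neg ha0.le, rpow_add ha0,
      rpow_one, sqrt_eq_rpow]
  rw [arcsineWeight, sub_sub_cancel, show (1 : ℝ) / 2 - 1 = -(1 / 2) by norm_num,
    rpow_neg_one_half h1a.le, rpow_neg_one_half ha0.le, rpow_neg_one_half (by nlinarith), hsq_pow,
    show 1 - a ^ 2 = (1 - a) * (1 + a) by ring, sqrt_mul h1a.le,
    show 1 - 1 / 2 * (1 - a) = (1 + a) / 2 by ring, sqrt_div h1a'.le, abs_neg,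
    abs_of_pos (by positivity)]
  have h2 : √2 * √2 = 2 := mul_self_sqrt zero_le_two
  have ha : √a * √a = a := mul_self_sqrt ha0.le
  have := sqrt_pos.mpr h1a
  have := sqrt_pos.mpr h1a'
  have := sqrt_pos.mpr ha0
  field_simp
  linear_combination h2

theorem integral_arcsineWeight_div_sqrt_one_sub_half_mul :
    ∫ t in Ioo (0 : ℝ) 1, (√(1 - 1 / 2 * t))⁻¹ * arcsineWeight t
      = (√2)⁻¹ * (Gamma (1 / 4) * Gamma (1 / 2) / Gamma (3 / 4)) := by
  have hderiv (u : ℝ) (hu : u ∈ Ioo (0 : ℝ) 1) :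
      HasDerivWithinAt (fun u ↦ 1 - √u) (-(1 / (2 * √u))) (Ioo 0 1) u := by
    simpa using ((hasDerivAt_sqrt hu.1.ne').const_sub 1).hasDerivWithinAt
  have hinj : InjOn (fun u : ℝ ↦ 1 - √u) (Ioo 0 1) := fun u hu v hv huv ↦ by
    rw [← sq_sqrt hu.1.le, ← sq_sqrt hv.1.le, show √u = √v by simpa using huv]
  rw [← image_one_sub_sqrt_Ioo,
    integral_image_eq_integral_abs_deriv_smul measurableSet_Ioo hderiv hinj,
    setIntegral_congr_fun measurableSet_Ioo
      (g := fun u ↦ (√2)⁻¹ * (u ^ ((1 / 4 : ℝ) - 1) * (1 - u) ^ ((1 / 2 : ℝ) - 1))),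
    integral_const_mul, integral_rpow_mul_one_sub_rpow (by norm_num) (by norm_num)]
  · norm_num
  · intro u hu
    obtain ⟨a, ha0, ha1, rfl⟩ : ∃ a, 0 < a ∧ a < 1 ∧ u = a ^ 2 :=
      ⟨√u, sqrt_pos.mpr hu.1, (sqrt_lt' one_pos).mpr (by simpa using hu.2), (sq_sqrt hu.1.le).symm⟩
    simp only [smul_eq_mul, sqrt_sq ha0.le]
    exact abs_deriv_mul_arcsineWeight_one_sub_eq ha0 ha1

theorem Real.Gamma_one_fourth_mul_Gamma_three_fourths :
    Gamma (1 / 4) * Gamma (3 / 4) = π * √2 := by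
  have h := Gamma_mul_Gamma_one_sub (1 / 4)
  rw [show (1 : ℝ) - 1 / 4 = 3 / 4 by norm_num, show π * (1 / 4) = π / 4 by ring,
    sin_pi_div_four] at h
  rw [h]
  have : √2 * √2 = 2 := mul_self_sqrt zero_le_two
  field_simp
  linear_combination -this

theorem hasSum_centralBinom_sq_mul_one_half_pow :
    HasSum (fun n : ℕ ↦ (n.centralBinom / 4 ^ n : ℝ) ^ 2 * (1 / 2) ^ n)
      (Gamma (1 / 4) ^ 2 / (2 * π ^ (3 / 2 : ℝ))) := by
  convert hasSum_centralBinom_sq_mul_pow (x := 1 / 2) (by norm_num [abs_of_pos]) using 1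
  have hΓ := Gamma_one_fourth_mul_Gamma_three_fourths
  have hπ : π ^ (3 / 2 : ℝ) = π * √π := by
    rw [show (3 / 2 : ℝ) = 1 + 1 / 2 by norm_num, rpow_add pi_pos, rpow_one, sqrt_eq_rpow]
  have := Gamma_pos_of_pos (show (0 : ℝ) < 3 / 4 by norm_num)
  rw [integral_arcsineWeight_div_sqrt_one_sub_half_mul, Gamma_one_half_eq, hπ]
  have h2 : √2 * √2 = 2 := mul_self_sqrt zero_le_two
  have hπ' : √π * √π = π := mul_self_sqrt pi_pos.le
  have := sqrt_pos.mpr pi_pos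
  field_simp
  linear_combination √2 * hΓ + π * h2 - 2 * hπ'

theorem Nat.centralBinom_succ_eq_two_mul_choose (k : ℕ) :
    (k + 1).centralBinom = 2 * (2 * k + 1).choose k := by
  rw [centralBinom_eq_two_mul_choose, show 2 * (k + 1) = 2 * k + 1 + 1 by ring, choose_succ_succ',
    choose_symm_half]
  omega

theorem one_div_thirtyTwo_pow_mul_choose_mul_choose {n : ℕ} (hn : 2 ≤ n) :
    (1 / 32 : ℝ) ^ n * ((2 * n).choose n : ℝ) * ((2 * n - 3).choose (n - 2) : ℝ)
        * (2 * (n : ℝ) - 1) / n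
      = 1 / 4 * ((n.centralBinom / 4 ^ n : ℝ) ^ 2 * (1 / 2) ^ n) := by
  obtain ⟨k, rfl⟩ := Nat.exists_eq_add_of_le' hn
  have hrec : ((k + 2 : ℕ) : ℝ) * (k + 2).centralBinom
      = 2 * (2 * (k + 1 : ℕ) + 1) * (k + 1).centralBinom := by
    exact_mod_cast (k + 1).succ_mul_centralBinom_succ
  have hchoose : ((2 * k + 1).choose k : ℝ) = (k + 1).centralBinom / 2 := by
    rw [Nat.centralBinom_succ_eq_two_mul_choose]
    push_cast
    ring
  rw [← Nat.centralBinom_eq_two_mul_choose, show 2 * (k + 2) - 3 = 2 * k + 1 by omega,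
    Nat.add_sub_cancel, hchoose]
  have hpow : (1 / 32 : ℝ) ^ (k + 2) * (4 ^ (k + 2)) ^ 2 = (1 / 2) ^ (k + 2) := by
    rw [← pow_mul, mul_comm (k + 2) 2, pow_mul, ← mul_pow]
    norm_num
  push_cast at hrec ⊢
  field_simp
  linear_combination
    (-2 * ((k + 2).centralBinom : ℝ) * (1 / 32) ^ (k + 2) * (4 ^ (k + 2)) ^ 2) * hrec
      + (2 * ((k + 2).centralBinom : ℝ) ^ 2 * (k + 2)) * hpow

theorem stmt_19 :
    ∑' k : ℕ, (fun n : ℕ =>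
        (1/32 : ℝ) ^ n * (Nat.choose (2*n) n : ℝ) * (Nat.choose (2*n-3) (n-2) : ℝ)
          * (2*(n:ℝ)-1) / (n:ℝ)) (k + 2)
      = Real.Gamma (1/4) ^ 2 / (8 * Real.pi ^ ((3:ℝ)/2)) - 9/32 := by
  have hS := (hasSum_nat_add_iff' 2).mpr hasSum_centralBinom_sq_mul_one_half_pow
  rw [tsum_congr fun k ↦ one_div_thirtyTwo_pow_mul_choose_mul_choose (by omega : 2 ≤ k + 2),
    (hS.mul_left (1 / 4)).tsum_eq]
  norm_num [Finset.sum_range_succ, Nat.centralBinom]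
  ring
end
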